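/- arXiv:1104.1012 — 3 statements merged into one kernel-verified Lean document; each statement's English description precedes it below -/
import Mathlib

section
/- Let M be a compact topological space and let F : C(M, ℝ) → ℝ be a positive linear functional such that F(φ)·F(ψ) = 0 whenever φ·ψ = 0. Then there exist c ∈ [0, ∞) and a point p ∈ M such that F(φ) = c·φ(p) for all φ ∈ C(M, ℝ). -/
open Set Function

/-- A positive linear functional on `C(M, ℝ)`, `M` compact Hausdorff and nonempty, which
annihilates products of disjointly supported functions, is a nonnegative multiple of a
point evaluation. -/
theorem stmt_0 {M : Type*} [TopologicalSpace M] [CompactSpace M] [T2Space M] [Nonempty M]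
    (F : C(M, ℝ) →ₗ[ℝ] ℝ)
    (hpos : ∀ φ : C(M, ℝ), 0 ≤ φ → 0 ≤ F φ)
    (hdisj : ∀ φ ψ : C(M, ℝ), φ * ψ = 0 → F φ * F ψ = 0) :
    ∃ (c : ℝ) (p : M), 0 ≤ c ∧ ∀ φ : C(M, ℝ), F φ = c * φ p := by
  by_cases hF : ∀ φ : C(M, ℝ), F φ = 0
  · exact ⟨0, Classical.arbitrary M, le_refl 0, fun φ => by simp [hF φ]⟩
  push_neg at hF
  obtain ⟨φ₀, hφ₀⟩ := hF
  -- monotonicity of F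
  have hmono : ∀ φ ψ : C(M, ℝ), φ ≤ ψ → F φ ≤ F ψ := by
    intro φ ψ h
    have : 0 ≤ F (ψ - φ) := hpos _ (by rwa [sub_nonneg])
    rw [map_sub] at this
    linarith
  -- Step A : there is a point in the "support" of F
  have hA : ∃ p : M, ∀ U : Set M, IsOpen U → p ∈ U →
      ∃ ψ : C(M, ℝ), (∀ x ∉ U, ψ x = 0) ∧ F ψ ≠ 0 := by
    by_contra hcon
    push_neg at hcon
    choose U hUo hUp hkill using hcon
    -- extract a finite subcover
    obtain ⟨t, ht⟩ := isCompact_univ.elim_finite_subcover U hUo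
      (fun x _ => mem_iUnion.2 ⟨x, hUp x⟩)
    -- reindex by Fin n
    set n := t.card with hn
    let e : Fin n → M := fun i => (t.equivFin.symm i : M)
    have hcov : (univ : Set M) ⊆ ⋃ i : Fin n, U (e i) := by
      intro x hx
      obtain ⟨q, hq⟩ := mem_iUnion.1 (ht hx)
      simp only [mem_iUnion] at hq ⊢
      obtain ⟨hqt, hxq⟩ := hq
      exact ⟨t.equivFin ⟨q, hqt⟩, by simpa [e] using hxq⟩
    obtain ⟨f, hfsupp, hfsum, hf01, -⟩ :=
      exists_continuous_sum_one_of_isOpen_isCompact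
        (fun i : Fin n => hUo (e i)) isCompact_univ hcov
    -- every φ has F φ = 0 : contradiction with φ₀
    apply hφ₀
    have hsum : φ₀ = ∑ i : Fin n, f i * φ₀ := by
      ext x
      have h1 : (∑ i : Fin n, (f i : M → ℝ)) x = (1 : M → ℝ) x := hfsum (mem_univ x)
      simp only [Finset.sum_apply, Pi.one_apply] at h1
      simp only [ContinuousMap.coe_sum, Finset.sum_apply, ContinuousMap.mul_apply]
      rw [← Finset.sum_mul, h1, one_mul]
    rw [hsum, map_sum]
    refine Finset.sum_eq_zero fun i _ => ?_
    refine hkill (e i) _ (fun x hx => ?_)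
    simp only [ContinuousMap.mul_apply]
    have : f i x = 0 := image_eq_zero_of_notMem_tsupport (fun hmem => hx (hfsupp i hmem))
    rw [this, zero_mul]
  obtain ⟨p, hp⟩ := hA
  -- Step B : F kills functions vanishing at p
  have key : ∀ φ : C(M, ℝ), φ p = 0 → F φ = 0 := by
    intro φ hφp
    have hbound : ∀ ε : ℝ, 0 < ε → |F φ| ≤ ε * F 1 := by
      intro ε hε
      -- truncation
      set φ₁ : C(M, ℝ) := (φ ⊓ ContinuousMap.const M ε) ⊔ ContinuousMap.const M (-ε) with hφ₁
      set φ₂ : C(M, ℝ) := φ - φ₁ with hφ₂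
      set U : Set M := {x | |φ x| < ε} with hU
      have hUo : IsOpen U := by
        have : Continuous fun x => |φ x| := φ.continuous.abs
        exact isOpen_lt this continuous_const
      have hpU : p ∈ U := by simp [hU, hφp, hε]
      -- φ₂ vanishes on U
      have hφ₂U : ∀ x ∈ U, φ₂ x = 0 := by
        intro x hx
        have h1 : |φ x| < ε := hx
        have : φ₁ x = φ x := by
          simp only [hφ₁, ContinuousMap.sup_apply, ContinuousMap.inf_apply,
            ContinuousMap.const_apply]
          rw [abs_lt] at h1
          rw [min_eq_left h1.2.le, max_eq_left (by linarith)]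
        simp [hφ₂, this]
      obtain ⟨ψ, hψU, hψF⟩ := hp U hUo hpU
      have hprod : φ₂ * ψ = 0 := by
        ext x
        by_cases hx : x ∈ U
        · simp [hφ₂U x hx]
        · simp [hψU x hx]
      have hFφ₂ : F φ₂ = 0 := by
        rcases mul_eq_zero.1 (hdisj _ _ hprod) with h | h
        · exact h
        · exact absurd h hψF
      have hFφ : F φ = F φ₁ := by
        have : F φ = F φ₁ + F φ₂ := by rw [hφ₂, map_sub]; ring
        rw [this, hFφ₂, add_zero]
      -- bounds on φ₁
      have hle : φ₁ ≤ ε • (1 : C(M, ℝ)) := by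
        rw [ContinuousMap.le_def]
        intro x
        simp only [hφ₁, ContinuousMap.sup_apply, ContinuousMap.inf_apply,
          ContinuousMap.const_apply, ContinuousMap.smul_apply, ContinuousMap.one_apply,
          smul_eq_mul, mul_one]
        exact max_le (min_le_right _ _) (by linarith)
      have hge : -(ε • (1 : C(M, ℝ))) ≤ φ₁ := by
        rw [ContinuousMap.le_def]
        intro x
        simp only [hφ₁, ContinuousMap.sup_apply, ContinuousMap.inf_apply,
          ContinuousMap.const_apply, ContinuousMap.neg_apply, ContinuousMap.smul_apply,
          ContinuousMap.one_apply, smul_eq_mul, mul_one]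
        exact le_max_right _ _
      have h1 : F φ₁ ≤ ε * F 1 := by
        have := hmono _ _ hle
        rwa [map_smul, smul_eq_mul] at this
      have h2 : -(ε * F 1) ≤ F φ₁ := by
        have := hmono _ _ hge
        rwa [map_neg, map_smul, smul_eq_mul] at this
      rw [hFφ]
      exact abs_le.2 ⟨h2, h1⟩
    have hF1 : 0 ≤ F 1 := hpos 1 (by intro x; simp)
    by_contra habs
    have habs' : 0 < |F φ| := abs_pos.2 habs
    rcases eq_or_lt_of_le hF1 with h | h
    · have := hbound 1 one_pos
      rw [← h, mul_zero] at this
      linarith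
    · have := hbound (|F φ| / (2 * F 1)) (by positivity)
      have hne : F 1 ≠ 0 := ne_of_gt h
      have heq : |F φ| / (2 * F 1) * F 1 = |F φ| / 2 := by
        field_simp
      rw [heq] at this
      linarith
  refine ⟨F 1, p, hpos 1 (by intro x; simp), fun φ => ?_⟩
  have h0 : F (φ - φ p • (1 : C(M, ℝ))) = 0 := by
    apply key
    simp
  rw [map_sub, map_smul, smul_eq_mul] at h0
  linarith [h0]
end

section
/- Let μ be a finite Borel measure on a compact Hausdorff space M such that for all continuous functions φ, ψ : M → ℝ with φ·ψ = 0 one has (∫ φ dμ)·(∫ ψ dμ) = 0. If μ is a regular measure, then μ is a nonnegative multiple of a Dirac measure: there exist c ≥ 0 and p ∈ M such that μ = c·δ_p. -/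
open MeasureTheory
open scoped NNReal ENNReal

/-- A finite regular Borel measure on a compact Hausdorff space whose integration functional
annihilates products of disjointly supported continuous functions is a nonnegative multiple
of a Dirac measure. -/
theorem stmt_2 {M : Type*} [TopologicalSpace M] [CompactSpace M] [T2Space M] [Nonempty M]
    [MeasurableSpace M] [BorelSpace M]
    (μ : Measure M) [IsFiniteMeasure μ] [μ.Regular]
    (hdisj : ∀ φ ψ : C(M, ℝ), φ * ψ = 0 →
      (∫ x, φ x ∂μ) * (∫ x, ψ x ∂μ) = 0) :
    ∃ (c : ℝ≥0) (p : M), μ = (c : ℝ≥0∞) • Measure.dirac p := by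
  rcases eq_or_ne μ 0 with h0 | h0
  · exact ⟨0, Classical.arbitrary M, by simp [h0]⟩
  -- find a point in the support of μ
  have hp : ∃ p : M, ∀ U : Set M, IsOpen U → p ∈ U → μ U ≠ 0 := by
    by_contra h
    push_neg at h
    choose U hUo hxU hU0 using h
    obtain ⟨t, -, ht⟩ := isCompact_univ.elim_nhds_subcover U
      (fun x _ => (hUo x).mem_nhds (hxU x))
    have huniv : μ Set.univ = 0 := by
      refine le_antisymm ?_ zero_le
      calc μ Set.univ ≤ μ (⋃ x ∈ t, U x) := measure_mono ht
        _ ≤ ∑ x ∈ t, μ (U x) := measure_biUnion_finset_le t U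
        _ = 0 := by simp [hU0]
    exact h0 (Measure.measure_univ_eq_zero.mp huniv)
  obtain ⟨p, hp⟩ := hp
  -- the complement of {p} is null
  have hcompl : μ {p}ᶜ = 0 := by
    by_contra hne
    have hpos : 0 < μ {p}ᶜ := pos_iff_ne_zero.mpr hne
    obtain ⟨K, hKsub, hKc, hKpos⟩ :=
      Measure.Regular.innerRegular (μ := μ) (isOpen_compl_singleton (x := p)) 0 hpos
    have hd : Disjoint ({p} : Set M) K := by
      rw [Set.disjoint_left]; rintro x rfl hxK; exact (hKsub hxK) rfl
    obtain ⟨U, V, hUo, hVo, hpU, hKV, hUV⟩ :=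
      SeparatedNhds.of_isCompact_isCompact isCompact_singleton hKc hd
    obtain ⟨φ, hφ0, hφ1, hφ01⟩ := exists_continuous_zero_one_of_isClosed
      hUo.isClosed_compl isClosed_singleton
      (by rw [Set.disjoint_left]; rintro x hx rfl; exact hx (hpU rfl))
    obtain ⟨ψ, hψ0, hψ1, hψ01⟩ := exists_continuous_zero_one_of_isClosed
      hVo.isClosed_compl hKc.isClosed
      (by rw [Set.disjoint_left]; intro x hx hxK; exact hx (hKV hxK))
    have hmul : φ * ψ = 0 := by
      ext x
      by_cases hxU : x ∈ U
      · have : ψ x = 0 := hψ0 (Set.disjoint_left.mp hUV hxU)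
        simp [this]
      · have : φ x = 0 := hφ0 hxU
        simp [this]
    have hφint : Integrable (fun x => φ x) μ :=
      φ.continuous.integrable_of_hasCompactSupport (HasCompactSupport.of_compactSpace _)
    have hψint : Integrable (fun x => ψ x) μ :=
      ψ.continuous.integrable_of_hasCompactSupport (HasCompactSupport.of_compactSpace _)
    have hφnn : 0 ≤ᵐ[μ] fun x => φ x := Filter.Eventually.of_forall fun x => (hφ01 x).1
    have hψnn : 0 ≤ᵐ[μ] fun x => ψ x := Filter.Eventually.of_forall fun x => (hψ01 x).1
    -- ∫ φ > 0
    set W : Set M := φ ⁻¹' Set.Ioi (1/2 : ℝ) with hW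
    have hWo : IsOpen W := (isOpen_Ioi).preimage φ.continuous
    have hpW : p ∈ W := by
      have : φ p = 1 := hφ1 rfl
      simp [hW, this]; norm_num
    have hWpos : 0 < (μ W).toReal :=
      ENNReal.toReal_pos (hp W hWo hpW) (measure_ne_top μ W)
    have hφIpos : 0 < ∫ x, φ x ∂μ := by
      have h1 : (1/2 : ℝ) * (μ W).toReal ≤ ∫ x in W, φ x ∂μ := by
        have := setIntegral_mono_on (f := fun _ => (1/2 : ℝ))
          ((integrableOn_const_iff).mpr (Or.inr (measure_lt_top μ W)))
          (hφint.integrableOn) hWo.measurableSet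
          (fun x hx => le_of_lt (by exact hx : (1/2 : ℝ) < φ x))
        simpa [mul_comm, measureReal_def] using this
      have h2 : ∫ x in W, φ x ∂μ ≤ ∫ x, φ x ∂μ :=
        setIntegral_le_integral hφint hφnn
      have : 0 < (1/2 : ℝ) * (μ W).toReal := by positivity
      linarith
    -- ∫ ψ > 0
    have hKpos' : 0 < (μ K).toReal :=
      ENNReal.toReal_pos (by simpa using hKpos.ne') (measure_ne_top μ K)
    have hψIpos : 0 < ∫ x, ψ x ∂μ := by
      have h1 : (μ K).toReal ≤ ∫ x in K, ψ x ∂μ := by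
        have := setIntegral_mono_on (f := fun _ => (1 : ℝ))
          ((integrableOn_const_iff).mpr (Or.inr (measure_lt_top μ K)))
          (hψint.integrableOn) hKc.measurableSet
          (fun x hx => (hψ1 hx).ge)
        simpa [measureReal_def] using this
      have h2 : ∫ x in K, ψ x ∂μ ≤ ∫ x, ψ x ∂μ :=
        setIntegral_le_integral hψint hψnn
      linarith
    have := hdisj φ ψ hmul
    nlinarith
  -- conclude μ = μ({p}) • δ_p
  refine ⟨(μ {p}).toNNReal, p, ?_⟩
  ext s hs
  have hsplit : μ (s ∩ {p}) + μ (s \ {p}) = μ s :=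
    measure_inter_add_diff s (measurableSet_singleton p)
  have hdiff : μ (s \ {p}) = 0 :=
    measure_mono_null (Set.diff_subset_compl s {p}) hcompl
  have hμs : μ s = μ (s ∩ {p}) := by rw [← hsplit, hdiff, add_zero]
  rw [Measure.smul_apply, Measure.dirac_apply' p hs, smul_eq_mul]
  by_cases hps : p ∈ s
  · have : s ∩ {p} = {p} := by
      apply Set.eq_singleton_iff_unique_mem.mpr
      exact ⟨⟨hps, rfl⟩, fun x hx => hx.2⟩
    rw [hμs, this]
    simp [Set.indicator_of_mem hps, ENNReal.coe_toNNReal (measure_ne_top μ {p})]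
  · have : s ∩ {p} = ∅ := by
      ext x; simp only [Set.mem_inter_iff, Set.mem_singleton_iff, Set.mem_empty_iff_false,
        iff_false]
      rintro ⟨hxs, rfl⟩; exact hps hxs
    rw [hμs, this, measure_empty, Set.indicator_of_notMem hps, mul_zero]
end

section
/- Let U : C(M₁, ℝ) → C(M₂, ℝ) be an order isomorphism between spaces of continuous functions on compact Hausdorff spaces M₁, M₂. Then there exist a homeomorphism τ : M₂ → M₁ and a continuous function h : M₂ → (0, ∞) such that (U φ)(q) = h(q)·φ(τ(q)) for all φ ∈ C(M₁, ℝ) and q ∈ M₂. -/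
open Set

section Aux

variable {M : Type*} [TopologicalSpace M] [CompactSpace M] [T2Space M]

/-- If a linear functional kills all nonnegative functions supported in each member of a
family of open sets, it kills every nonnegative function supported in a finite union. -/
lemma vanish_of_cover (L : C(M, ℝ) →ₗ[ℝ] ℝ)
    {ι : Type*} (V : ι → Set M) (hVo : ∀ i, IsOpen (V i))
    (h0 : ∀ i, ∀ ψ : C(M, ℝ), 0 ≤ ψ → tsupport ψ ⊆ V i → L ψ = 0)
    (s : Finset ι) :
    ∀ φ : C(M, ℝ), 0 ≤ φ → tsupport φ ⊆ ⋃ i ∈ s, V i → L φ = 0 := by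
  classical
  induction s using Finset.induction_on with
  | empty =>
    intro φ _ hsupp
    have : φ = 0 := by
      ext x
      by_contra hx
      have : x ∈ tsupport φ := subset_closure (by simpa [Function.mem_support] using hx)
      simpa using hsupp this
    simp [this]
  | @insert a s ha IH =>
    intro φ hφ hsupp
    set Vs : Set M := ⋃ i ∈ s, V i with hVs
    have hVsopen : IsOpen Vs := isOpen_biUnion fun i _ => hVo i
    set K : Set M := tsupport φ \ Vs with hK
    have hKclosed : IsClosed K := (isClosed_tsupport φ).sdiff hVsopen
    have hKVa : K ⊆ V a := by
      rintro x ⟨hx1, hx2⟩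
      have := hsupp hx1
      simp only [Finset.mem_insert, mem_iUnion, exists_prop] at this
      rcases this with ⟨i, hi, hxi⟩
      rcases hi with rfl | hi
      · exact hxi
      · exact absurd (mem_biUnion hi hxi) hx2
    obtain ⟨W, hWopen, hKW, hclW⟩ :=
      normal_exists_closure_subset hKclosed (hVo a) hKVa
    -- a function g = 1 on closure W, with tsupport in V a
    obtain ⟨g, hgsupp, hg1, hg01⟩ :=
      exists_tsupport_one_of_isOpen_isClosed (hVo a)
        (IsCompact.closure_of_subset isCompact_univ (subset_univ _)) isClosed_closure hclW
    have hg0 : ∀ x, 0 ≤ g x := fun x => (hg01 x).1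
    have hg1' : ∀ x, g x ≤ 1 := fun x => (hg01 x).2
    set φ₁ : C(M, ℝ) := φ * g with hφ₁
    set φ₂ : C(M, ℝ) := φ - φ₁ with hφ₂
    have hφx : ∀ x, 0 ≤ φ x := fun x => by
      have := ContinuousMap.le_def.mp hφ x; simpa using this
    have h1 : L φ₁ = 0 := by
      apply h0 a
      · exact ContinuousMap.le_def.mpr fun x => by
          simpa [hφ₁] using mul_nonneg (hφx x) (hg0 x)
      · refine subset_trans (closure_minimal ?_ (isClosed_tsupport g)) hgsupp
        intro x hx
        simp only [Function.mem_support, ContinuousMap.mul_apply] at hx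
        have hgx : g x ≠ 0 := fun hgx => hx (by simp [hφ₁, hgx])
        exact subset_closure hgx
    have h2 : L φ₂ = 0 := by
      apply IH
      · refine ContinuousMap.le_def.mpr fun x => ?_
        have : φ x * g x ≤ φ x * 1 := mul_le_mul_of_nonneg_left (hg1' x) (hφx x)
        simpa [hφ₂, hφ₁] using by linarith
      · -- tsupport φ₂ ⊆ Vs
        have hsub : Function.support ⇑φ₂ ⊆ tsupport φ \ W := by
          intro x hx
          simp only [Function.mem_support, hφ₂, hφ₁, ContinuousMap.sub_apply,
            ContinuousMap.mul_apply] at hx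
          constructor
          · apply subset_closure
            simp only [Function.mem_support]
            intro h; exact hx (by simp [h])
          · intro hxW
            have : g x = 1 := hg1 (subset_closure hxW)
            exact hx (by simp [this])
        have hclosed : IsClosed (tsupport φ \ W) := (isClosed_tsupport φ).sdiff hWopen
        refine subset_trans (closure_minimal hsub hclosed) ?_
        rintro x ⟨hx1, hx2⟩
        by_contra hxVs
        exact hx2 (hKW ⟨hx1, hxVs⟩)
    have : φ = φ₁ + φ₂ := by ext x; simp [hφ₂]
    rw [this, map_add, h1, h2, add_zero]

/-- A positive linear functional on `C(M,ℝ)` with `L 1 ≠ 0` which "preserves disjointness"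
is a multiple of a point evaluation. -/
lemma exists_point_rep (L : C(M, ℝ) →ₗ[ℝ] ℝ)
    (hpos : ∀ φ : C(M, ℝ), 0 ≤ φ → 0 ≤ L φ)
    (hone : L 1 ≠ 0)
    (hdisj : ∀ φ ψ : C(M, ℝ), 0 ≤ φ → 0 ≤ ψ → φ * ψ = 0 → L φ = 0 ∨ L ψ = 0) :
    ∃ p : M, ∀ φ : C(M, ℝ), L φ = L 1 * φ p := by
  classical
  set Good : Set M → Prop := fun V => ∀ ψ : C(M, ℝ), 0 ≤ ψ → tsupport ψ ⊆ V → L ψ = 0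
    with hGood
  -- the "support" of L is nonempty
  have hS : ∃ p : M, ∀ V, IsOpen V → p ∈ V → ¬ Good V := by
    by_contra hc
    push_neg at hc
    choose V hVo hVp hVg using hc
    obtain ⟨t, ht⟩ := isCompact_univ.elim_finite_subcover V hVo
      (fun p _ => mem_iUnion.2 ⟨p, hVp p⟩)
    have := vanish_of_cover L V hVo (fun i => hVg i) t 1
      (ContinuousMap.le_def.mpr fun x => by simp) (subset_trans (subset_univ _) ht)
    exact hone this
  obtain ⟨p, hp⟩ := hS
  -- every point other than p has a good neighborhood
  have huniq : ∀ x : M, x ≠ p → ∃ V, IsOpen V ∧ x ∈ V ∧ Good V := by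
    intro x hxp
    by_contra hc
    push_neg at hc
    obtain ⟨U₁, U₂, hU₁o, hU₂o, hpU₁, hxU₂, hdisjU⟩ := t2_separation (Ne.symm hxp)
    have h1 : ¬ Good U₁ := hp U₁ hU₁o hpU₁
    have h2 : ¬ Good U₂ := by
      intro hg
      exact (hc U₂ hU₂o hxU₂) hg
    simp only [hGood] at h1 h2
    push_neg at h1 h2
    obtain ⟨φ, hφ0, hφs, hφL⟩ := h1
    obtain ⟨ψ, hψ0, hψs, hψL⟩ := h2
    have hmul : φ * ψ = 0 := by
      ext y
      by_cases hy : y ∈ U₁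
      · have : y ∉ tsupport ψ := fun h => (disjoint_left.mp hdisjU hy) (hψs h)
        simp [image_eq_zero_of_notMem_tsupport this]
      · have : y ∉ tsupport φ := fun h => hy (hφs h)
        simp [image_eq_zero_of_notMem_tsupport this]
    rcases hdisj φ ψ hφ0 hψ0 hmul with h | h
    · exact hφL h
    · exact hψL h
  -- functions vanishing on a neighborhood of p are killed
  have hC : ∀ (Wp : Set M), IsOpen Wp → p ∈ Wp →
      ∀ ψ : C(M, ℝ), 0 ≤ ψ → (∀ x ∈ Wp, ψ x = 0) → L ψ = 0 := by
    intro Wp hWpo hpWp ψ hψ0 hψW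
    have hsupp : tsupport ψ ⊆ Wpᶜ := by
      apply closure_minimal _ (isClosed_compl_iff.mpr hWpo)
      intro x hx
      simp only [Function.mem_support] at hx
      exact fun hxW => hx (hψW x hxW)
    have hpn : p ∉ tsupport ψ := fun h => (hsupp h) hpWp
    have hxV : ∀ x : M, ∃ V, IsOpen V ∧ (x ∈ tsupport ψ → x ∈ V) ∧ Good V := by
      intro x
      by_cases hx : x ∈ tsupport ψ
      · obtain ⟨V, hVo, hxv, hVg⟩ := huniq x (fun h => hpn (h ▸ hx))
        exact ⟨V, hVo, fun _ => hxv, hVg⟩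
      · refine ⟨∅, isOpen_empty, fun h => absurd h hx, ?_⟩
        intro ψ' _ hs
        have : ψ' = 0 := by
          ext y
          by_contra hy
          exact (hs (subset_closure (by simpa [Function.mem_support] using hy))).elim
        simp [this]
    choose V hVo hVmem hVg using hxV
    obtain ⟨t, ht⟩ := ((isClosed_tsupport ψ).isCompact).elim_finite_subcover V hVo
      (fun x hx => mem_iUnion.2 ⟨x, hVmem x hx⟩)
    exact vanish_of_cover L V hVo hVg t ψ hψ0 ht
  -- monotonicity of L
  have hmono : ∀ f g : C(M, ℝ), f ≤ g → L f ≤ L g := by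
    intro f g hfg
    have h1 : 0 ≤ L (g - f) := hpos _ (by simpa using sub_nonneg.mpr hfg)
    have : L (g - f) = L g - L f := map_sub L g f
    linarith [this ▸ h1]
  have hL1 : 0 ≤ L 1 := hpos 1 (ContinuousMap.le_def.mpr fun x => by simp)
  -- nonnegative functions vanishing at p are killed
  have hD : ∀ φ : C(M, ℝ), 0 ≤ φ → φ p = 0 → L φ = 0 := by
    intro φ hφ0 hφp
    have hφx : ∀ x, 0 ≤ φ x := fun x => by
      have := ContinuousMap.le_def.mp hφ0 x; simpa using this
    have key : ∀ ε : ℝ, 0 < ε → L φ ≤ ε * L 1 := by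
      intro ε hε
      set K : Set M := φ ⁻¹' Ici ε with hKdef
      have hKclosed : IsClosed K := IsClosed.preimage φ.continuous isClosed_Ici
      have hpK : p ∉ K := by simp [hKdef, hφp]; linarith
      obtain ⟨Wp, hWpo, hpWp, hclWp⟩ :=
        normal_exists_closure_subset isClosed_singleton hKclosed.isOpen_compl
          (by simpa using hpK)
      have hpWp' : p ∈ Wp := hpWp rfl
      obtain ⟨g, hg0, hg1, hg01⟩ :=
        exists_continuous_zero_one_of_isClosed isClosed_closure hKclosed
          (disjoint_left.mpr fun x hx hxK => (hclWp hx) hxK)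
      have hle : φ ≤ φ * g + ε • (1 : C(M, ℝ)) := by
        refine ContinuousMap.le_def.mpr fun x => ?_
        simp only [ContinuousMap.add_apply, ContinuousMap.mul_apply,
          ContinuousMap.smul_apply, ContinuousMap.one_apply, smul_eq_mul, mul_one]
        by_cases hx : x ∈ K
        · have : g x = 1 := hg1 hx
          rw [this]; linarith
        · have h1 : φ x < ε := by
            simp only [hKdef, mem_preimage, mem_Ici, not_le] at hx; exact hx
          have h2 : 0 ≤ φ x * g x := mul_nonneg (hφx x) (hg01 x).1
          linarith
      have hLφg : L (φ * g) = 0 := by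
        apply hC Wp hWpo hpWp'
        · exact ContinuousMap.le_def.mpr fun x => by
            simpa using mul_nonneg (hφx x) (hg01 x).1
        · intro x hxW
          have : g x = 0 := hg0 (subset_closure hxW)
          simp [this]
      calc L φ ≤ L (φ * g + ε • 1) := hmono _ _ hle
        _ = L (φ * g) + ε * L 1 := by rw [map_add, map_smul]; simp
        _ = ε * L 1 := by rw [hLφg, zero_add]
    have h1 : L φ ≤ 0 := by
      by_contra hc
      push_neg at hc
      rcases eq_or_lt_of_le hL1 with h | h
      · have := key 1 one_pos; rw [← h] at this; linarith
      · have hk := key (L φ / (2 * L 1)) (by positivity)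
        have h2 : L φ / (2 * L 1) * L 1 = L φ / 2 := by
          field_simp
        rw [h2] at hk; linarith
    linarith [hpos φ hφ0]
  refine ⟨p, fun φ => ?_⟩
  set ψ : C(M, ℝ) := φ - φ p • 1 with hψdef
  have hψp : ψ p = 0 := by simp [hψdef]
  set ψp : C(M, ℝ) := ψ ⊔ 0 with hψp'
  set ψm : C(M, ℝ) := (-ψ) ⊔ 0 with hψm'
  have hdecomp : ψ = ψp - ψm := by
    ext x
    simp only [hψp', hψm', ContinuousMap.sub_apply, ContinuousMap.sup_apply,
      ContinuousMap.neg_apply, ContinuousMap.zero_apply]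
    exact (max_zero_sub_max_neg_zero_eq_self (ψ x)).symm
  have hψpL : L ψp = 0 := by
    apply hD
    · exact le_sup_right
    · simp [hψp', hψp]
  have hψmL : L ψm = 0 := by
    apply hD
    · exact le_sup_right
    · simp [hψm', hψp]
  have hLψ : L ψ = 0 := by rw [hdecomp, map_sub, hψpL, hψmL, sub_zero]
  have : L φ = L ψ + φ p * L 1 := by
    rw [hψdef, map_sub, map_smul]; simp
  rw [this, hLψ, zero_add, mul_comm]

end Aux

/-- Continuous real functions separate points of a compact Hausdorff space. -/
lemma sep_points {M : Type*} [TopologicalSpace M] [CompactSpace M] [T2Space M]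
    (a b : M) (hab : ∀ φ : C(M, ℝ), φ a = φ b) : a = b := by
  by_contra hne
  obtain ⟨f, hf0, hf1, _⟩ := exists_continuous_zero_one_of_isClosed
    (isClosed_singleton (x := a)) (isClosed_singleton (x := b))
    (Set.disjoint_singleton.mpr hne)
  have := hab f
  rw [hf0 rfl, hf1 rfl] at this
  simp at this

section Main

variable {M₁ M₂ : Type*}
  [TopologicalSpace M₁] [CompactSpace M₁] [T2Space M₁]
  [TopologicalSpace M₂] [CompactSpace M₂] [T2Space M₂]

lemma weight_pos (U : C(M₁, ℝ) ≃ₗ[ℝ] C(M₂, ℝ))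
    (hord : ∀ φ : C(M₁, ℝ), 0 ≤ U φ ↔ 0 ≤ φ) (q : M₂) :
    0 < U 1 q := by
  have h1 : (0 : C(M₂, ℝ)) ≤ U 1 := (hord 1).mpr (ContinuousMap.le_def.mpr fun x => by simp)
  have h1q : 0 ≤ U 1 q := by have := ContinuousMap.le_def.mp h1 q; simpa using this
  rcases eq_or_lt_of_le h1q with h | h
  · exfalso
    have hmono : ∀ f g : C(M₁, ℝ), f ≤ g → U f ≤ U g := by
      intro f g hfg
      have : (0 : C(M₂, ℝ)) ≤ U (g - f) := (hord _).mpr (by simpa using sub_nonneg.mpr hfg)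
      rw [map_sub] at this
      simpa using sub_nonneg.mp this
    have hzero : ∀ φ : C(M₁, ℝ), U φ q = 0 := by
      intro φ
      have habs : ∀ x, -‖φ‖ ≤ φ x ∧ φ x ≤ ‖φ‖ := by
        intro x
        have hx := φ.norm_coe_le_norm x
        rw [Real.norm_eq_abs] at hx
        exact abs_le.mp hx
      have hub : φ ≤ ‖φ‖ • (1 : C(M₁, ℝ)) := ContinuousMap.le_def.mpr fun x => by
        simpa using (habs x).2
      have hlb : -(‖φ‖ • (1 : C(M₁, ℝ))) ≤ φ := ContinuousMap.le_def.mpr fun x => by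
        simpa using (habs x).1
      have h1 : U φ ≤ ‖φ‖ • U 1 := by
        have := hmono φ (‖φ‖ • 1) hub
        rwa [map_smul] at this
      have h2 : -(‖φ‖ • U 1) ≤ U φ := by
        have := hmono (-(‖φ‖ • 1)) φ hlb
        rwa [map_neg, map_smul] at this
      have e1 := ContinuousMap.le_def.mp h1 q
      have e2 := ContinuousMap.le_def.mp h2 q
      simp only [ContinuousMap.smul_apply, ContinuousMap.neg_apply, smul_eq_mul, ← h] at e1 e2
      rw [mul_zero] at e1 e2
      linarith
    have := hzero (U.symm 1)
    rw [U.apply_symm_apply] at this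
    simp at this
  · exact h

lemma half_rep (U : C(M₁, ℝ) ≃ₗ[ℝ] C(M₂, ℝ))
    (hord : ∀ φ : C(M₁, ℝ), 0 ≤ U φ ↔ 0 ≤ φ) :
    ∃ t : M₂ → M₁, Continuous t ∧ ∀ (φ : C(M₁, ℝ)) (q : M₂), U φ q = U 1 q * φ (t q) := by
  classical
  have hmono : ∀ f g : C(M₁, ℝ), f ≤ g → U f ≤ U g := by
    intro f g hfg
    have : (0 : C(M₂, ℝ)) ≤ U (g - f) := (hord _).mpr (by simpa using sub_nonneg.mpr hfg)
    rw [map_sub] at this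
    simpa using sub_nonneg.mp this
  let e : C(M₁, ℝ) ≃o C(M₂, ℝ) :=
    { toEquiv := U.toEquiv
      map_rel_iff' := by
        intro f g
        constructor
        · intro h
          have : (0 : C(M₂, ℝ)) ≤ U (g - f) := by
            rw [map_sub]
            simpa using sub_nonneg.mpr h
          have := (hord _).mp this
          simpa using sub_nonneg.mp this
        · exact fun h => hmono f g h }
  have hecoe : ∀ f : C(M₁, ℝ), e f = U f := fun f => rfl
  have hdisj : ∀ φ ψ : C(M₁, ℝ), 0 ≤ φ → 0 ≤ ψ → φ * ψ = 0 →
      ∀ q, U φ q * U ψ q = 0 := by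
    intro φ ψ hφ hψ hmul q
    have hφx : ∀ x, 0 ≤ φ x := fun x => by
      have := ContinuousMap.le_def.mp hφ x; simpa using this
    have hψx : ∀ x, 0 ≤ ψ x := fun x => by
      have := ContinuousMap.le_def.mp hψ x; simpa using this
    have hinf : φ ⊓ ψ = 0 := by
      ext x
      have h1 : φ x * ψ x = 0 := by
        have := congrArg (fun f : C(M₁, ℝ) => f x) hmul
        simpa using this
      simp only [ContinuousMap.inf_apply, ContinuousMap.zero_apply]
      rcases mul_eq_zero.mp h1 with h | h
      · rw [h]; exact min_eq_left (hψx x)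
      · rw [h]; exact min_eq_right (hφx x)
    have hUinf : U φ ⊓ U ψ = 0 := by
      have h2 : e (φ ⊓ ψ) = e φ ⊓ e ψ := map_inf e φ ψ
      rw [hinf, hecoe, hecoe, hecoe, map_zero] at h2
      exact h2.symm
    have hq : min (U φ q) (U ψ q) = 0 := by
      have := congrArg (fun f : C(M₂, ℝ) => f q) hUinf
      simpa using this
    have hUφ : 0 ≤ U φ q := by
      have := ContinuousMap.le_def.mp ((hord φ).mpr hφ) q; simpa using this
    have hUψ : 0 ≤ U ψ q := by
      have := ContinuousMap.le_def.mp ((hord ψ).mpr hψ) q; simpa using this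
    rcases le_total (U φ q) (U ψ q) with h | h
    · rw [min_eq_left h] at hq; rw [hq, zero_mul]
    · rw [min_eq_right h] at hq; rw [hq, mul_zero]
  have hUq : ∀ q : M₂, ∃ p : M₁, ∀ φ : C(M₁, ℝ), U φ q = U 1 q * φ p := by
    intro q
    let Lq : C(M₁, ℝ) →ₗ[ℝ] ℝ :=
      { toFun := fun φ => U φ q
        map_add' := fun f g => by simp [map_add]
        map_smul' := fun c f => by simp [map_smul] }
    have := exists_point_rep Lq
      (fun φ hφ => by
        have := ContinuousMap.le_def.mp ((hord φ).mpr hφ) q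
        simpa [Lq] using this)
      (ne_of_gt (weight_pos U hord q))
      (fun φ ψ hφ hψ hmul => mul_eq_zero.mp (hdisj φ ψ hφ hψ hmul q))
    simpa [Lq] using this
  choose t ht using hUq
  refine ⟨t, ?_, fun φ q => ht q φ⟩
  rw [continuous_iff_continuousAt]
  intro q
  rw [ContinuousAt, tendsto_nhds]
  intro V hVo hV
  obtain ⟨f, hf0, hf1, hf01⟩ := exists_continuous_zero_one_of_isClosed
    (isClosed_compl_iff.mpr hVo) (isClosed_singleton (x := t q))
    (disjoint_left.mpr fun x hx hxt => hx (by rw [mem_singleton_iff.mp hxt]; exact hV))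
  have hopen : IsOpen ((U f) ⁻¹' Ioi 0) := IsOpen.preimage (U f).continuous isOpen_Ioi
  have hqmem : q ∈ (U f) ⁻¹' Ioi 0 := by
    have h0 : U f q = U 1 q * f (t q) := ht q f
    have h1 : f (t q) = 1 := hf1 rfl
    simp only [mem_preimage, mem_Ioi, h0, h1, mul_one]
    exact weight_pos U hord q
  refine Filter.mem_of_superset (hopen.mem_nhds hqmem) ?_
  intro q' hq'
  simp only [mem_preimage, mem_Ioi] at hq'
  rw [ht q' f] at hq'
  by_contra hq'V
  have h2 : f (t q') = 0 := hf0 hq'V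
  rw [h2, mul_zero] at hq'
  exact lt_irrefl 0 hq'

end Main

/-- Every order isomorphism between spaces of continuous functions on compact Hausdorff
spaces is a weighted composition operator: `(U φ)(q) = h(q) · φ(τ(q))` for a homeomorphism
`τ : M₂ → M₁` and a continuous strictly positive weight `h`. -/
theorem stmt_18 {M₁ M₂ : Type*}
    [TopologicalSpace M₁] [CompactSpace M₁] [T2Space M₁]
    [TopologicalSpace M₂] [CompactSpace M₂] [T2Space M₂]
    (U : C(M₁, ℝ) ≃ₗ[ℝ] C(M₂, ℝ))
    (hord : ∀ φ : C(M₁, ℝ), 0 ≤ U φ ↔ 0 ≤ φ) :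
    ∃ (τ : M₂ ≃ₜ M₁) (h : C(M₂, ℝ)),
      (∀ q, 0 < h q) ∧ ∀ (φ : C(M₁, ℝ)) (q : M₂), U φ q = h q * φ (τ q) := by
  classical
  obtain ⟨t, htc, ht⟩ := half_rep U hord
  have hord' : ∀ ψ : C(M₂, ℝ), 0 ≤ U.symm ψ ↔ 0 ≤ ψ := by
    intro ψ
    conv_rhs => rw [← U.apply_symm_apply ψ]
    exact (hord _).symm
  obtain ⟨s, hsc, hs⟩ := half_rep U.symm hord'
  have hpos := weight_pos U hord
  have hpos' := weight_pos U.symm hord'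
  -- t ∘ s = id
  have hts : ∀ p : M₁, t (s p) = p := by
    intro p
    refine sep_points (t (s p)) p fun φ => ?_
    have h1 : U.symm (U φ) p = U.symm 1 p * (U φ) (s p) := hs (U φ) p
    rw [U.symm_apply_apply, ht φ (s p)] at h1
    have h2 : U.symm (U 1) p = U.symm 1 p * (U 1) (s p) := hs (U 1) p
    rw [U.symm_apply_apply] at h2
    have h2' : (1 : ℝ) = U.symm 1 p * (U 1) (s p) := by simpa using h2
    rw [← mul_assoc, ← h2', one_mul] at h1
    exact h1.symm
  have hst : ∀ q : M₂, s (t q) = q := by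
    intro q
    refine sep_points (s (t q)) q fun ψ => ?_
    have h1 : U (U.symm ψ) q = U 1 q * (U.symm ψ) (t q) := ht (U.symm ψ) q
    rw [U.apply_symm_apply, hs ψ (t q)] at h1
    have h2 : U (U.symm 1) q = U 1 q * (U.symm 1) (t q) := ht (U.symm 1) q
    rw [U.apply_symm_apply] at h2
    have h2' : (1 : ℝ) = U 1 q * (U.symm 1) (t q) := by simpa using h2
    rw [← mul_assoc, ← h2', one_mul] at h1
    exact h1.symm
  exact ⟨{ toFun := t, invFun := s, left_inv := hst, right_inv := hts,
           continuous_toFun := htc, continuous_invFun := hsc },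
         U 1, hpos, fun φ q => ht φ q⟩
end
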